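/- For all integers n ≥ 2 and k ≥ 2, there exists a family H of functions from {1,…,n} to {1,…,k²} with |H| ≤ k·⌈log₂(n+1)⌉ + 1 such that for every subset S ⊆ {1,…,n} with |S| ≤ k, some h ∈ H is injective on S. -/

import Mathlib

/-!
A uniformly random map `[n] → [k²]` collides on a fixed set `S` of at most `k` points with
probability at most `C(k, 2) / k² < 1/2`, so `m` independent random maps all collide on `S` with
probability below `2⁻ᵐ`. There are at most `(n + 1)ᵏ ≤ 2 ^ (k ⌈log₂ (n + 1)⌉)` such sets, so for
`m = k ⌈log₂ (n + 1)⌉ + 1` the union bound leaves an `m`-tuple of maps, one of which is injective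
on each such `S`. Probabilities become cardinalities of sets of maps.
-/

open Finset Function

section

variable {α β : Type*} [Fintype α] [DecidableEq α] [Fintype β] [DecidableEq β]

/-- `(f, y) ↦ update f b y` is injective on pairs with `f a = f b`, since `f b` is recovered as
the value at `a`. -/
theorem card_filter_apply_eq_apply_mul_card_le {a b : α} (hab : a ≠ b) :
    #{f : α → β | f a = f b} * Fintype.card β ≤ Fintype.card β ^ Fintype.card α := by
  calc #{f : α → β | f a = f b} * Fintype.card β
      = #(({f : α → β | f a = f b} : Finset (α → β)) ×ˢ (univ : Finset β)) := by
        rw [card_product, card_univ]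
    _ ≤ #(univ : Finset (α → β)) :=
        card_le_card_of_injOn (fun p => update p.1 b p.2) (fun _ _ => mem_coe.2 (mem_univ _)) ?_
    _ = Fintype.card β ^ Fintype.card α := by rw [card_univ, Fintype.card_fun]
  rintro ⟨f, y⟩ hf ⟨g, z⟩ hg hfg
  simp only [coe_product, Set.mem_prod, mem_coe, mem_filter, mem_univ, true_and] at hf hg hfg
  have hyz : y = z := by simpa using congrFun hfg b
  have hab' : f b = g b := by
    rw [← hf.1, ← hg.1]
    simpa [hab] using congrFun hfg a
  refine Prod.ext (funext fun x => ?_) hyz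
  by_cases hx : x = b
  · simpa [hx] using hab'
  · simpa [hx] using congrFun hfg x

theorem card_filter_not_injOn_mul_card_le (s : Finset α) :
    #{f : α → β | ¬ Set.InjOn f s} * Fintype.card β
      ≤ (#s).choose 2 * Fintype.card β ^ Fintype.card α := by
  have hsub : ({f : α → β | ¬ Set.InjOn f s} : Finset (α → β))
      ⊆ (s.powersetCard 2).biUnion fun t => {f : α → β | ¬ Set.InjOn f t} := by
    intro f hf
    simp only [Set.InjOn, mem_filter, mem_univ, true_and, mem_coe, not_forall] at hf
    obtain ⟨x, hx, y, hy, hxy, hne⟩ := hf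
    refine mem_biUnion.2 ⟨{x, y}, mem_powersetCard.2 ⟨?_, card_pair hne⟩, ?_⟩
    · exact insert_subset hx (singleton_subset_iff.2 hy)
    · simp [hxy, hne]
  calc #{f : α → β | ¬ Set.InjOn f s} * Fintype.card β
      ≤ ∑ t ∈ s.powersetCard 2, #{f : α → β | ¬ Set.InjOn f t} * Fintype.card β :=
        by rw [← sum_mul]; exact Nat.mul_le_mul_right _ ((card_le_card hsub).trans card_biUnion_le)
    _ ≤ ∑ _t ∈ s.powersetCard 2, Fintype.card β ^ Fintype.card α := by
        refine sum_le_sum fun t ht => ?_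
        obtain ⟨a, b, hab, rfl⟩ := card_eq_two.1 (mem_powersetCard.1 ht).2
        simpa [Set.injOn_pair, hab] using card_filter_apply_eq_apply_mul_card_le (β := β) hab
    _ = (#s).choose 2 * Fintype.card β ^ Fintype.card α := by
        rw [sum_const, card_powersetCard, smul_eq_mul]

theorem card_filter_card_le_le_pow (k : ℕ) :
    #{t : Finset α | #t ≤ k} ≤ (Fintype.card α + 1) ^ k := by
  induction k with
  | zero => simp [card_le_one]
  | succ k ih =>
    have hsub : ({t : Finset α | #t ≤ k + 1} : Finset (Finset α))
        ⊆ ({t : Finset α | #t ≤ k} : Finset (Finset α)) ∪ powersetCard (k + 1) univ := by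
      intro t ht
      simp only [mem_filter, mem_univ, true_and, mem_union, mem_powersetCard_univ] at ht ⊢
      omega
    calc #{t : Finset α | #t ≤ k + 1}
        ≤ (Fintype.card α + 1) ^ k + (Fintype.card α).choose (k + 1) :=
          (card_le_card hsub).trans ((card_union_le _ _).trans
            (by rw [card_powersetCard, card_univ]; exact Nat.add_le_add_right ih _))
      _ ≤ (Fintype.card α + 1) ^ k + Fintype.card α * (Fintype.card α + 1) ^ k := by
          gcongr
          calc (Fintype.card α).choose (k + 1) ≤ Fintype.card α ^ (k + 1) := Nat.choose_le_pow _ _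
            _ = Fintype.card α * Fintype.card α ^ k := pow_succ' _ _
            _ ≤ _ := by gcongr; omega
      _ = (Fintype.card α + 1) ^ (k + 1) := by ring

theorem two_mul_card_filter_not_injOn_le [Nonempty β] {s : Finset α}
    (hs : #s * (#s - 1) ≤ Fintype.card β) :
    2 * #{f : α → β | ¬ Set.InjOn f s} ≤ Fintype.card (α → β) := by
  have hchoose : 2 * (#s).choose 2 = #s * (#s - 1) := by
    rw [Nat.choose_two_right, Nat.two_mul_div_two_of_even (Nat.even_mul_pred_self _)]
  refine Nat.le_of_mul_le_mul_right ?_ (Fintype.card_pos (α := β))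
  calc 2 * #{f : α → β | ¬ Set.InjOn f s} * Fintype.card β
      ≤ 2 * ((#s).choose 2 * Fintype.card β ^ Fintype.card α) := by
        rw [mul_assoc]; exact Nat.mul_le_mul_left 2 (card_filter_not_injOn_mul_card_le s)
    _ ≤ Fintype.card (α → β) * Fintype.card β := by
        rw [Fintype.card_fun, ← mul_assoc, hchoose, mul_comm (_ ^ _)]; gcongr

end

theorem exists_forall_exists_notMem_of_two_mul_card_le {X ι : Type*} [Fintype X] [Nonempty X]
    [DecidableEq X] (I : Finset ι) (B : ι → Finset X) {m : ℕ}
    (hB : ∀ i ∈ I, 2 * #(B i) ≤ Fintype.card X) (hI : #I < 2 ^ m) :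
    ∃ t : Fin m → X, ∀ i ∈ I, ∃ j, t j ∉ B i := by
  by_contra! h
  have hcover : (univ : Finset (Fin m → X)) ⊆ I.biUnion fun i => Fintype.piFinset fun _ => B i :=
    fun t _ => mem_biUnion.2 <| (h t).imp fun i ⟨hi, ht⟩ => ⟨hi, Fintype.mem_piFinset.2 ht⟩
  have hX : 0 < Fintype.card X ^ m := pow_pos Fintype.card_pos m
  refine (Nat.mul_lt_mul_of_pos_right hI hX).not_ge ?_
  calc 2 ^ m * Fintype.card X ^ m
      ≤ 2 ^ m * ∑ i ∈ I, #(B i) ^ m := by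
        gcongr
        simpa [Fintype.card_piFinset] using (card_le_card hcover).trans card_biUnion_le
    _ = ∑ i ∈ I, (2 * #(B i)) ^ m := by rw [mul_sum]; simp only [mul_pow]
    _ ≤ ∑ _i ∈ I, Fintype.card X ^ m := sum_le_sum fun i hi => Nat.pow_le_pow_left (hB i hi) m
    _ = #I * Fintype.card X ^ m := by rw [sum_const, smul_eq_mul]

theorem exists_finset_injOn_of_card_le {α β : Type*} [Fintype α] [DecidableEq α] [Fintype β]
    [DecidableEq β] [Nonempty β] {k m : ℕ} (hβ : k ^ 2 ≤ Fintype.card β)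
    (hm : (Fintype.card α + 1) ^ k < 2 ^ m) :
    ∃ H : Finset (α → β), #H ≤ m ∧ ∀ s : Finset α, #s ≤ k → ∃ h ∈ H, Set.InjOn h s := by
  have hhalf : ∀ s ∈ ({s : Finset α | #s ≤ k} : Finset (Finset α)),
      2 * #{f : α → β | ¬ Set.InjOn f s} ≤ Fintype.card (α → β) := by
    intro s hs
    have hsk : #s ≤ k := (mem_filter.1 hs).2
    refine two_mul_card_filter_not_injOn_le (hβ.trans' ?_)
    calc #s * (#s - 1) ≤ #s * #s := Nat.mul_le_mul_left _ (Nat.sub_le _ _)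
      _ ≤ k ^ 2 := by rw [sq]; gcongr
  obtain ⟨t, ht⟩ := exists_forall_exists_notMem_of_two_mul_card_le _ _ hhalf
    ((card_filter_card_le_le_pow k).trans_lt hm)
  refine ⟨univ.image t, card_image_le.trans (by simp), fun s hs => ?_⟩
  obtain ⟨j, hj⟩ := ht s (mem_filter.2 ⟨mem_univ _, hs⟩)
  exact ⟨t j, mem_image_of_mem _ (mem_univ j), by simpa using hj⟩

theorem injOn_extend_val {α γ : Type*} {p : α → Prop} [DecidablePred p] {g : Subtype p → γ}
    (e : α → γ) {s : Finset α} (hs : ∀ x ∈ s, p x) (hg : Set.InjOn g (s.subtype p)) :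
    Set.InjOn (extend Subtype.val g e) s := by
  intro x hx y hy hxy
  lift x to Subtype p using hs x hx
  lift y to Subtype p using hs y hy
  simp only [Subtype.val_injective.extend_apply] at hxy
  exact congrArg Subtype.val (hg (mem_subtype.2 hx) (mem_subtype.2 hy) hxy)

theorem stmt_12 (n k : ℕ) (hk : 2 ≤ k) :
    ∃ H : Finset (ℕ → ℕ),
      (∀ h ∈ H, ∀ x ∈ Finset.Icc 1 n, h x ∈ Finset.Icc 1 (k ^ 2)) ∧
      H.card ≤ k * Nat.clog 2 (n + 1) + 1 ∧
      ∀ S ⊆ Finset.Icc 1 n, S.card ≤ k → ∃ h ∈ H, Set.InjOn h (S : Set ℕ) := by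
  classical
  have : Nonempty (Icc 1 (k ^ 2)) := ⟨⟨1, by simp; nlinarith⟩⟩
  have hm : (Fintype.card (Icc 1 n) + 1) ^ k < 2 ^ (k * Nat.clog 2 (n + 1) + 1) := by
    simp only [Fintype.card_coe, Nat.card_Icc, Nat.add_sub_cancel]
    calc (n + 1) ^ k ≤ (2 ^ Nat.clog 2 (n + 1)) ^ k := by gcongr; exact Nat.le_pow_clog one_lt_two _
      _ < 2 ^ (k * Nat.clog 2 (n + 1) + 1) := by
          rw [← pow_mul, mul_comm]; exact Nat.pow_lt_pow_right one_lt_two (lt_add_one _)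
  obtain ⟨H, hH, hinj⟩ := exists_finset_injOn_of_card_le (α := Icc 1 n) (β := Icc 1 (k ^ 2))
    (by simp) hm
  refine ⟨H.image fun h => extend Subtype.val (Subtype.val ∘ h) 0, ?_, card_image_le.trans hH, ?_⟩
  · rintro _ hh x hx
    obtain ⟨h, -, rfl⟩ := mem_image.1 hh
    exact Subtype.val_injective.extend_apply _ _ ⟨x, hx⟩ ▸ (h ⟨x, hx⟩).2
  · intro S hS hSk
    obtain ⟨h, hmem, hh⟩ := hinj (S.subtype (· ∈ Icc 1 n)) ((card_subtype _ _).trans_le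
      (card_filter_le _ _ |>.trans hSk))
    exact ⟨_, mem_image_of_mem _ hmem,
      injOn_extend_val _ (fun x hx => hS hx) (Subtype.val_injective.comp_injOn hh)⟩
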